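/- arXiv:1702.02876 — 7 statements merged into one kernel-verified Lean document; each statement's English description precedes it below -/
import Mathlib

section
/- Let μ_h = ν_h/δ_h and μ² = (β_vh β_hv)/(δ_v δ_h), with all parameters positive and μ_h < 1. Then the three quantities R₁ (the largest root of λ² − μ_h λ − μ² = 0), R₂ = μ_h + μ², and R₃ = μ²/(1 − μ_h) satisfy: R₁ > 1 ⟺ R₂ > 1 ⟺ R₃ > 1. -/
/-- Let `μ_h = ν_h/δ_h < 1` and `μ² = β_vh β_hv/(δ_v δ_h)` with all parameters positive.
The three reproductive numbers `R₁` (largest root of `λ² − μ_h λ − μ² = 0`),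
`R₂ = μ_h + μ²` and `R₃ = μ²/(1 − μ_h)` satisfy `R₁ > 1 ↔ R₂ > 1 ↔ R₃ > 1`. -/
theorem three_reproductive_numbers_threshold
    (βvh βhv νh δh δv : ℝ)
    (hβvh : 0 < βvh) (hβhv : 0 < βhv) (hνh : 0 < νh) (hδh : 0 < δh) (hδv : 0 < δv)
    (hμh : νh / δh < 1)
    (R₁ : ℝ)
    (hroot : R₁ ^ 2 - (νh / δh) * R₁ - βvh * βhv / (δv * δh) = 0)
    (hmax : ∀ x : ℝ, x ^ 2 - (νh / δh) * x - βvh * βhv / (δv * δh) = 0 → x ≤ R₁) :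
    (R₁ > 1 ↔ νh / δh + βvh * βhv / (δv * δh) > 1) ∧
      (νh / δh + βvh * βhv / (δv * δh) > 1 ↔
        (βvh * βhv / (δv * δh)) / (1 - νh / δh) > 1) := by
  set μ := νh / δh with hμdef
  set m := βvh * βhv / (δv * δh) with hmdef
  have hμ : 0 < μ := div_pos hνh hδh
  have hm : 0 < m := div_pos (mul_pos hβvh hβhv) (mul_pos hδv hδh)
  have hD : (0:ℝ) ≤ μ ^ 2 + 4 * m := by nlinarith
  set s := Real.sqrt (μ ^ 2 + 4 * m) with hsdef
  have hs2 : s ^ 2 = μ ^ 2 + 4 * m := Real.sq_sqrt hD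
  have hs0 : 0 ≤ s := Real.sqrt_nonneg _
  have hrootp : ((μ + s) / 2) ^ 2 - μ * ((μ + s) / 2) - m = 0 := by nlinarith [hs2]
  have hle : (μ + s) / 2 ≤ R₁ := hmax _ hrootp
  have hfac : (R₁ - (μ + s) / 2) * (R₁ - (μ - s) / 2) = 0 := by nlinarith [hs2, hroot]
  have hEq : R₁ = (μ + s) / 2 := by
    rcases mul_eq_zero.mp hfac with h | h
    · linarith
    · linarith
  constructor
  · constructor
    · intro h
      have hs1 : 2 - μ < s := by rw [hEq] at h; linarith
      nlinarith [hs2]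
    · intro h
      have hs1 : 2 - μ < s := by nlinarith [hs2, hs0]
      rw [hEq]; linarith
  · have h1μ : 0 < 1 - μ := by linarith
    have hiff : 1 < m / (1 - μ) ↔ 1 - μ < m := one_lt_div h1μ
    constructor <;> intro h
    · exact hiff.mpr (by linarith)
    · have := hiff.mp h
      linarith
end

section
/- Consider the (k+2)×(k+2) next generation matrix G = F V⁻¹ where F has single nonzero entry F₁₂ = β_vh, and V is the lower-triangular-plus-diagonal matrix with V₁₁ = δ_h, V₂₂ = δ_v, V₂₁ = −β_hv, V₂,(i+2) = −β_{r_i v}, V_{(i+2),2} = −β_{v r_i}, V_{(i+2),(i+2)} = δ_{r_i} − ν_i, and V_{(i+2),(j+2)} = −γ_{ji} for i ≠ j, all other entries zero. Let K be the k×k lower-right block of V (rows and columns 3..k+2). Then the spectral radius of G equals (β_hv β_vh det K)/(δ_h det(V₁,₁)), where V₁,₁ is V with row 1 and column 1 deleted. -/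
/-- Spectral radius of a real matrix: the supremum of the absolute values of the
(complex) roots of its characteristic polynomial. -/
noncomputable def specRad {n : Type*} [Fintype n] [DecidableEq n]
    (A : Matrix n n ℝ) : ℝ :=
  sSup {r : ℝ | ∃ μ : ℂ, ((A.map (algebraMap ℝ ℂ)).charpoly).IsRoot μ ∧ r = ‖μ‖}

/-- The `(k+2)×(k+2)` matrix `V` of the full human–vector–reservoir model.
Row/column `0` is the human, row/column `1` the vector, and rows/columns `i+2`
(for `0 ≤ i < k`) correspond to the reservoirs `R_{i+1}`; the parameter functions
are indexed so that index `i` refers to reservoir `R_{i+1}`. -/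
def Vfull (k : ℕ) (βhv δh δv : ℝ) (βrv βvr δr ν : ℕ → ℝ) (γ : ℕ → ℕ → ℝ) :
    Matrix (Fin (k + 2)) (Fin (k + 2)) ℝ :=
  Matrix.of fun i j =>
    if i.val = 0 then (if j.val = 0 then δh else 0)
    else if i.val = 1 then
      (if j.val = 0 then -βhv else if j.val = 1 then δv else -βrv (j.val - 2))
    else if j.val = 0 then 0
    else if j.val = 1 then -βvr (i.val - 2)
    else if i.val = j.val then δr (i.val - 2) - ν (i.val - 2)
    else -γ (j.val - 2) (i.val - 2)

/-- The `(k+2)×(k+2)` matrix `F`, whose single nonzero entry is `F₀₁ = β_vh`. -/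
def Ffull (k : ℕ) (βvh : ℝ) : Matrix (Fin (k + 2)) (Fin (k + 2)) ℝ :=
  Matrix.of fun i j => if i.val = 0 ∧ j.val = 1 then βvh else 0

/-!
Only the first row of `G = F V⁻¹` is nonzero, so `G` is upper triangular with diagonal
`(G₀₀, 0, …, 0)` and its spectral radius is `|G₀₀|`. By Cramer's rule
`G₀₀ = β_vh (adj V)₁₀ / det V`. The first row of `V` is `(δ_h, 0, …, 0)`, so
`det V = δ_h det V₁,₁`; in the minor of `V` giving `(adj V)₁₀` the first column is
`(-β_hv, 0, …, 0)`, so `(adj V)₁₀ = β_hv det K`.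
-/

open Polynomial Matrix

theorem specRad_of_isUpperTriangular {n : Type*} [Fintype n] [DecidableEq n] [LinearOrder n]
    {A : Matrix n n ℝ} (hA : A.IsUpperTriangular) :
    specRad A = sSup (Set.range fun i => |A i i|) := by
  have hroot (μ : ℂ) :
      ((A.map (algebraMap ℝ ℂ)).charpoly).IsRoot μ ↔ ∃ i, (A i i : ℂ) = μ := by
    rw [charpoly_of_isUpperTriangular _ (hA.map _), isRoot_prod]
    simp [sub_eq_zero, eq_comm]
  unfold specRad
  congr 1
  ext r
  constructor
  · rintro ⟨μ, hμ, rfl⟩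
    obtain ⟨i, rfl⟩ := (hroot μ).1 hμ
    exact ⟨i, by simp⟩
  · rintro ⟨i, rfl⟩
    exact ⟨_, (hroot _).2 ⟨i, rfl⟩, by simp⟩

theorem specRad_eq_abs_of_forall_ne_zero_eq_zero {n : ℕ}
    {A : Matrix (Fin (n + 1)) (Fin (n + 1)) ℝ} (hA : ∀ i j, i ≠ 0 → A i j = 0) :
    specRad A = |A 0 0| := by
  rw [specRad_of_isUpperTriangular fun i j hji => hA i j (Fin.ne_zero_of_lt hji)]
  refine le_antisymm (csSup_le (Set.range_nonempty _) ?_)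
    (le_csSup (Set.finite_range _).bddAbove ⟨0, rfl⟩)
  rintro _ ⟨i, rfl⟩
  rcases eq_or_ne i 0 with rfl | hi
  · rfl
  · simp [hA i i hi]

namespace Matrix

variable {R : Type*} [CommRing R] {n : ℕ} (A : Matrix (Fin (n + 1)) (Fin (n + 1)) R)

theorem det_eq_mul_det_submatrix_succ_of_column_zero (h : ∀ i, i ≠ 0 → A i 0 = 0) :
    A.det = A 0 0 * (A.submatrix Fin.succ Fin.succ).det := by
  rw [det_succ_column_zero, Finset.sum_eq_single 0 (fun i _ hi => by simp [h i hi]) (by simp)]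
  simp

theorem det_eq_mul_det_submatrix_succ_of_row_zero (h : ∀ j, j ≠ 0 → A 0 j = 0) :
    A.det = A 0 0 * (A.submatrix Fin.succ Fin.succ).det := by
  rw [← det_transpose, det_eq_mul_det_submatrix_succ_of_column_zero _ h, ← transpose_submatrix,
    det_transpose, transpose_apply]

end Matrix

section
variable (k : ℕ) (βvh : ℝ) (M : Matrix (Fin (k + 2)) (Fin (k + 2)) ℝ)

theorem Ffull_mul_apply_zero (j : Fin (k + 2)) : (Ffull k βvh * M) 0 j = βvh * M 1 j := by
  rw [mul_apply, Finset.sum_eq_single 1]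
  · simp [Ffull]
  · intro l _ hl
    simp [Ffull, show (l : ℕ) ≠ 1 by simpa [Fin.ext_iff] using hl]
  · simp

theorem Ffull_mul_apply_of_ne_zero {i : Fin (k + 2)} (hi : i ≠ 0) (j : Fin (k + 2)) :
    (Ffull k βvh * M) i j = 0 := by
  simp [mul_apply, Ffull, hi]

end

section
variable (k : ℕ) (βhv δh δv : ℝ) (βrv βvr δr ν : ℕ → ℝ) (γ : ℕ → ℕ → ℝ)

theorem det_Vfull : (Vfull k βhv δh δv βrv βvr δr ν γ).det =
    δh * ((Vfull k βhv δh δv βrv βvr δr ν γ).submatrix Fin.succ Fin.succ).det := by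
  rw [det_eq_mul_det_submatrix_succ_of_row_zero _ fun j hj => by simp [Vfull, hj]]
  simp [Vfull]

theorem adjugate_Vfull_one_zero : (Vfull k βhv δh δv βrv βvr δr ν γ).adjugate 1 0 =
    βhv * ((Vfull k βhv δh δv βrv βvr δr ν γ).submatrix
      (fun p : Fin k => p.succ.succ) (fun p : Fin k => p.succ.succ)).det := by
  have h1 (p : Fin k) : (1 : Fin (k + 2)).succAbove p.succ = p.succ.succ :=
    Fin.succAbove_of_le_castSucc _ _ (by simp [Fin.le_def])
  rw [adjugate_fin_succ_eq_det_submatrix,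
    det_eq_mul_det_submatrix_succ_of_column_zero _ fun i hi => by simp [Vfull, hi]]
  simp only [submatrix_submatrix, Function.comp_def, Fin.succAbove_zero, h1]
  simp [Vfull]

end

theorem specRad_full_ngm_general (k : ℕ) (βvh βhv δh δv : ℝ) (βrv βvr δr ν : ℕ → ℝ)
    (γ : ℕ → ℕ → ℝ)
    (hG : 0 ≤ (Ffull k βvh * (Vfull k βhv δh δv βrv βvr δr ν γ)⁻¹) 0 0) :
    specRad (Ffull k βvh * (Vfull k βhv δh δv βrv βvr δr ν γ)⁻¹) =
      βhv * βvh *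
          ((Vfull k βhv δh δv βrv βvr δr ν γ).submatrix
            (fun p : Fin k => p.succ.succ) (fun p : Fin k => p.succ.succ)).det /
        (δh * ((Vfull k βhv δh δv βrv βvr δr ν γ).submatrix Fin.succ Fin.succ).det) := by
  rw [specRad_eq_abs_of_forall_ne_zero_eq_zero fun i j hi =>
      Ffull_mul_apply_of_ne_zero k βvh _ hi j,
    abs_of_nonneg hG, Ffull_mul_apply_zero, inv_def, Matrix.smul_apply, Ring.inverse_eq_inv',
    adjugate_Vfull_one_zero, det_Vfull, smul_eq_mul]
  ring

/-- The spectral radius of `G = F V⁻¹` equals `β_hv β_vh det K / (δ_h det V₁,₁)`, where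
`K` is the lower-right `k×k` block of `V` and `V₁,₁` is `V` with its first row and column
deleted (given `δ_h > 0`, `det V ≠ 0`, and `G₁₁ ≥ 0`). -/
theorem specRad_full_ngm (k : ℕ) (βvh βhv δh δv : ℝ) (βrv βvr δr ν : ℕ → ℝ)
    (γ : ℕ → ℕ → ℝ)
    (hδh : 0 < δh)
    (hdet : (Vfull k βhv δh δv βrv βvr δr ν γ).det ≠ 0)
    (hG : 0 ≤ (Ffull k βvh * (Vfull k βhv δh δv βrv βvr δr ν γ)⁻¹) 0 0) :
    specRad (Ffull k βvh * (Vfull k βhv δh δv βrv βvr δr ν γ)⁻¹) =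
      βhv * βvh *
          ((Vfull k βhv δh δv βrv βvr δr ν γ).submatrix
            (fun p : Fin k => p.succ.succ) (fun p : Fin k => p.succ.succ)).det /
        (δh * ((Vfull k βhv δh δv βrv βvr δr ν γ).submatrix Fin.succ Fin.succ).det) :=
  specRad_full_ngm_general k βvh βhv δh δv βrv βvr δr ν γ hG
end

section
/- Define R₀ʳ = Σ_{j=1}^{k} β_{r_j v} (−1)^j det(W₁,ⱼ₊₁)/(δ_v det K) (assuming det K ≠ 0 and δ_v ≠ 0), R₀ʰ = (β_hv β_vh)/(δ_h δ_v), and R₀ = (β_hv β_vh det K)/(δ_h det V₁,₁) (assuming det V₁,₁ ≠ 0). Then R₀ = R₀ʰ/(1 − R₀ʳ). -/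
/-- With `R₀ʳ = Σ_{j=1}^k β_{r_j v} (−1)^j det(W₁,ⱼ₊₁)/(δ_v det K)`,
`R₀ʰ = β_hv β_vh/(δ_h δ_v)` and `R₀ = β_hv β_vh det K/(δ_h det V₁,₁)`, one has
`R₀ = R₀ʰ/(1 − R₀ʳ)`.  Here `W = V₁,₁` is `V` with the first row and column deleted,
`K` the lower-right `k×k` block of `W`; the summation index `j : Fin k` corresponds to
the paper's `j+1`, so the paper's sign `(−1)^j` reads `(−1)^{(j:ℕ)+1}`. -/
theorem R0_eq_R0h_div_one_sub_R0r (k : ℕ) (βvh βhv δh δv : ℝ) (βrv βvr δr ν : ℕ → ℝ)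
    (γ : ℕ → ℕ → ℝ)
    (hδh : δh ≠ 0) (hδv : δv ≠ 0)
    (hK : (((Vfull k βhv δh δv βrv βvr δr ν γ).submatrix Fin.succ Fin.succ).submatrix
            Fin.succ Fin.succ).det ≠ 0)
    (hW : ((Vfull k βhv δh δv βrv βvr δr ν γ).submatrix Fin.succ Fin.succ).det ≠ 0) :
    βhv * βvh * (((Vfull k βhv δh δv βrv βvr δr ν γ).submatrix Fin.succ Fin.succ).submatrix
          Fin.succ Fin.succ).det /
        (δh * ((Vfull k βhv δh δv βrv βvr δr ν γ).submatrix Fin.succ Fin.succ).det) =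
      (βhv * βvh / (δh * δv)) /
        (1 - ∑ j : Fin k, βrv j * (-1 : ℝ) ^ ((j : ℕ) + 1) *
              (((Vfull k βhv δh δv βrv βvr δr ν γ).submatrix Fin.succ Fin.succ).submatrix
                Fin.succ (Fin.succAbove j.succ)).det /
            (δv * (((Vfull k βhv δh δv βrv βvr δr ν γ).submatrix Fin.succ Fin.succ).submatrix
                Fin.succ Fin.succ).det)) := by
  set V := Vfull k βhv δh δv βrv βvr δr ν γ with hV
  set W := V.submatrix Fin.succ Fin.succ with hWdef
  set K := W.submatrix Fin.succ Fin.succ with hKdef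
  have h00 : W 0 0 = δv := by
    simp [hWdef, hV, Vfull]
  have hentry : ∀ j : Fin k, W 0 j.succ = -βrv j := by
    intro j
    simp [hWdef, hV, Vfull, Fin.val_succ]
  set S := ∑ j : Fin k, βrv j * (-1 : ℝ) ^ ((j : ℕ) + 1) *
      (W.submatrix Fin.succ (Fin.succAbove j.succ)).det with hS
  have key : W.det = δv * K.det - S := by
    rw [Matrix.det_succ_row_zero, Fin.sum_univ_succ, hS]
    rw [Fin.succAbove_zero, h00]
    simp only [Fin.val_succ, Fin.val_zero, pow_zero, one_mul]
    rw [← hKdef, sub_eq_add_neg, ← Finset.sum_neg_distrib]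
    congr 1
    refine Finset.sum_congr rfl fun j _ => ?_
    rw [hentry j]
    ring
  have hsum : (∑ j : Fin k, βrv j * (-1 : ℝ) ^ ((j : ℕ) + 1) *
      (W.submatrix Fin.succ (Fin.succAbove j.succ)).det / (δv * K.det)) = S / (δv * K.det) := by
    rw [hS, Finset.sum_div]
  rw [hsum]
  have hden : 1 - S / (δv * K.det) = W.det / (δv * K.det) := by
    rw [key]; field_simp
  rw [hden]
  field_simp
end

section
/- Let G be the (k+2)×(k+2) nonnegative matrix with G₁₂ = β_vh/δ_v, G₂₁ = β_hv/δ_h, G₂,(i+2) = β_{r_i v}/δ_{r_i}, G_{(i+2),2} = β_{v r_i}/δ_v for i = 1,…,k, and all other entries zero (all parameters positive). Then the spectral radius of G is √(μ_vh² + Σ_{i=1}^k μ_{v r_i}²), where μ_vh² = (β_vh β_hv)/(δ_v δ_h) and μ_{v r_i}² = (β_{v r_i} β_{r_i v})/(δ_v δ_{r_i}). -/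
/-- The `(k+2)×(k+2)` next generation matrix of the star-shaped infection network:
index `0` is the human, index `1` the vector, and index `i+2` (for `0 ≤ i < k`)
reservoir `R_{i+1}`; `G₀₁ = β_vh/δ_v`, `G₁₀ = β_hv/δ_h`, `G₁,(i+2) = β_{r_i v}/δ_{r_i}`,
`G_{(i+2),1} = β_{v r_i}/δ_v`, and all other entries zero. -/
noncomputable def Gstar (k : ℕ) (βvh βhv δh δv : ℝ) (βrv βvr δr : ℕ → ℝ) :
    Matrix (Fin (k + 2)) (Fin (k + 2)) ℝ :=
  Matrix.of fun i j =>
    if i.val = 0 ∧ j.val = 1 then βvh / δv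
    else if i.val = 1 ∧ j.val = 0 then βhv / δh
    else if i.val = 1 ∧ 2 ≤ j.val then βrv (j.val - 2) / δr (j.val - 2)
    else if j.val = 1 ∧ 2 ≤ i.val then βvr (i.val - 2) / δv
    else 0

/-!
All nonzero entries of `G` lie in the row and the column of the hub (the vector), so `G = P Q`
with `P = [e_hub | G_{·,hub}]` of size `(k+2) × 2` and `Q = [G_{hub,·} ; e_hubᵀ]` of size
`2 × (k+2)`. Hence `χ_G = X^k χ_{QP}`, and `QP = [[0, s], [1, 0]]` with
`s = Σ_j G_{hub,j} G_{j,hub}`, so the eigenvalues of `G` are `0` and `±√s`.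
-/

open Polynomial

namespace Matrix

variable {n R : Type*} [Fintype n] [DecidableEq n] [CommRing R] [Nontrivial R]

theorem charpoly_of_starShaped {A : Matrix n n R} {c : n} (hcc : A c c = 0)
    (hoff : ∀ i j, i ≠ c → j ≠ c → A i j = 0) (hn : 2 ≤ Fintype.card n) :
    A.charpoly = X ^ (Fintype.card n - 2) * (X ^ 2 - C (∑ j, A c j * A j c)) := by
  set P : Matrix n (Fin 2) R := of fun i => ![(Pi.single c 1 : n → R) i, A i c]
  set Q : Matrix (Fin 2) n R := of ![A c, (Pi.single c 1 : n → R)]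
  have hPQ : P * Q = A := by
    ext i j
    by_cases hi : i = c <;> by_cases hj : j = c <;>
      simp [P, Q, mul_apply, Fin.sum_univ_two, hi, hj, hcc, hoff]
  have hQP : Q * P = !![0, ∑ j, A c j * A j c; 1, 0] := by
    ext a b
    fin_cases a <;> fin_cases b <;> simp [P, Q, mul_apply, Pi.single_apply, hcc]
  conv_lhs => rw [← hPQ]
  rw [charpoly_mul_comm_of_le _ _ (by simpa), hQP, charpoly_fin_two]
  simp [trace, det_fin_two, sub_eq_add_neg]

end Matrix

theorem Complex.norm_eq_sqrt_of_sq_eq_ofReal {μ : ℂ} {s : ℝ} (hs : 0 ≤ s) (h : μ ^ 2 = s) :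
    ‖μ‖ = √s := by
  rw [← Real.sqrt_sq (norm_nonneg μ), ← norm_pow, h, Complex.norm_real, Real.norm_of_nonneg hs]

theorem specRad_eq_sqrt_of_charpoly_eq {n : Type*} [Fintype n] [DecidableEq n]
    {A : Matrix n n ℝ} {k : ℕ} {s : ℝ} (hs : 0 ≤ s) (hA : A.charpoly = X ^ k * (X ^ 2 - C s)) :
    specRad A = √s := by
  have hroot (μ : ℂ) :
      ((A.map (algebraMap ℝ ℂ)).charpoly).IsRoot μ ↔ μ = 0 ∧ k ≠ 0 ∨ μ ^ 2 = s := by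
    rw [Matrix.charpoly_map, hA]
    simp [sub_eq_zero]
  refine IsGreatest.csSup_eq ⟨⟨√s, ?_, ?_⟩, ?_⟩
  · exact (hroot _).2 (.inr (by rw [← Complex.ofReal_pow, Real.sq_sqrt hs]))
  · simp [abs_of_nonneg (Real.sqrt_nonneg s)]
  · rintro r ⟨μ, hμ, rfl⟩
    rcases (hroot μ).1 hμ with ⟨rfl, -⟩ | hμ
    · simp [Real.sqrt_nonneg]
    · exact (Complex.norm_eq_sqrt_of_sq_eq_ofReal hs hμ).le

section Gstar

variable (k : ℕ) (βvh βhv δh δv : ℝ) (βrv βvr δr : ℕ → ℝ)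

theorem Gstar_apply_one_one : Gstar k βvh βhv δh δv βrv βvr δr 1 1 = 0 := by
  simp [Gstar]

theorem Gstar_apply_eq_zero (i j : Fin (k + 2)) (hi : i ≠ 1) (hj : j ≠ 1) :
    Gstar k βvh βhv δh δv βrv βvr δr i j = 0 := by
  simp only [ne_eq, Fin.ext_iff, Fin.val_one] at hi hj
  simp [Gstar, hi, hj]

theorem sum_Gstar_mul_Gstar :
    ∑ j, Gstar k βvh βhv δh δv βrv βvr δr 1 j * Gstar k βvh βhv δh δv βrv βvr δr j 1 =
      βvh * βhv / (δv * δh) + ∑ i : Fin k, βvr i * βrv i / (δv * δr i) := by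
  simp [Fin.sum_univ_succ, Gstar, div_mul_div_comm, mul_comm]

end Gstar

/-- The spectral radius of the star NGM is
`√(μ_vh² + Σ_i μ_{v r_i}²)` where `μ_vh² = β_vh β_hv/(δ_v δ_h)` and
`μ_{v r_i}² = β_{v r_i} β_{r_i v}/(δ_v δ_{r_i})`. -/
theorem specRad_star (k : ℕ) (βvh βhv δh δv : ℝ) (βrv βvr δr : ℕ → ℝ)
    (hβvh : 0 < βvh) (hβhv : 0 < βhv) (hδh : 0 < δh) (hδv : 0 < δv)
    (hβrv : ∀ i : Fin k, 0 < βrv i) (hβvr : ∀ i : Fin k, 0 < βvr i)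
    (hδr : ∀ i : Fin k, 0 < δr i) :
    specRad (Gstar k βvh βhv δh δv βrv βvr δr) =
      Real.sqrt (βvh * βhv / (δv * δh) +
        ∑ i : Fin k, βvr i * βrv i / (δv * δr i)) := by
  have hs : 0 ≤ βvh * βhv / (δv * δh) + ∑ i : Fin k, βvr i * βrv i / (δv * δr i) :=
    add_nonneg (by positivity) <| Finset.sum_nonneg fun i _ =>
      div_nonneg (mul_pos (hβvr i) (hβrv i)).le (mul_pos hδv (hδr i)).le
  refine specRad_eq_sqrt_of_charpoly_eq (k := k) hs ?_
  simpa [sum_Gstar_mul_Gstar] using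
    Matrix.charpoly_of_starShaped (Gstar_apply_one_one ..) (Gstar_apply_eq_zero _ _ _ _ _ _ _ _)
      (by simp)
end

section
/- Let A be an n×n nonnegative real matrix and for a cyclic permutation σ on a subset {i₁,…,i_m} ⊆ {1,…,n} define μ_σ(A) = (Π_{j=1}^m a_{i_j, σ(i_j)})^{1/m}. Then for every cycle σ, μ_σ(A) ≤ ρ(A), where ρ(A) is the spectral radius of A. -/
/-!
If `c` is the product of the entries along a cycle of length `m + 1` through `i`, then by
nonnegativity `c ^ k ≤ (A ^ ((m + 1) * k)) i i ≤ trace (A ^ ((m + 1) * k))`, and the trace is the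
sum of the `(m + 1) * k`-th powers of the `n` eigenvalues, so it is at most `n * ρ ^ ((m + 1) * k)`.
A bound `c ^ k ≤ n * (ρ ^ (m + 1)) ^ k` for every `k` forces `c ≤ ρ ^ (m + 1)`.
-/

open Finset

theorem le_of_forall_pow_le_mul_pow {K : Type*} [Field K] [LinearOrder K] [IsStrictOrderedRing K]
    [Archimedean K] {c r C : K} (hr : 0 ≤ r) (h : ∀ k : ℕ, c ^ k ≤ C * r ^ k) : c ≤ r := by
  by_contra! hrc
  rcases hr.eq_or_lt with rfl | hr
  · exact (by simpa using h 1 : c ≤ 0).not_gt hrc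
  obtain ⟨k, hk⟩ := pow_unbounded_of_one_lt C ((one_lt_div hr).mpr hrc)
  rw [div_pow, lt_div_iff₀ (pow_pos hr k)] at hk
  exact (h k).not_gt hk

section SpectralBound

variable {ι : Type*} [Fintype ι] [DecidableEq ι]

theorem Matrix.norm_trace_le_card_mul {K : Type*} [NormedField K] [IsAlgClosed K]
    {M : Matrix ι ι K} {r : ℝ} (hr : 0 ≤ r) (h : ∀ μ ∈ spectrum K M, ‖μ‖ ≤ r) :
    ‖M.trace‖ ≤ Fintype.card ι * r := by
  have hroots : ∀ μ ∈ M.charpoly.roots, ‖μ‖ ≤ r := fun μ hμ =>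
    h μ (Matrix.mem_spectrum_iff_isRoot_charpoly.mpr (Polynomial.isRoot_of_mem_roots hμ))
  have hcard : (M.charpoly.roots.card : ℝ) ≤ Fintype.card ι := by
    exact_mod_cast M.charpoly_natDegree_eq_dim ▸ M.charpoly.card_roots'
  calc ‖M.trace‖ = ‖M.charpoly.roots.sum‖ := by rw [M.trace_eq_sum_roots_charpoly]
    _ ≤ (M.charpoly.roots.map (‖·‖)).sum := norm_multiset_sum_le _
    _ ≤ M.charpoly.roots.card * r := by
        refine (Multiset.sum_le_card_nsmul _ r ?_).trans_eq (by simp)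
        intro x hx
        obtain ⟨μ, hμ, rfl⟩ := Multiset.mem_map.mp hx
        exact hroots μ hμ
    _ ≤ Fintype.card ι * r := by gcongr

theorem specRad_nonneg (A : Matrix ι ι ℝ) : 0 ≤ specRad A :=
  Real.sSup_nonneg (by rintro _ ⟨μ, -, rfl⟩; exact norm_nonneg μ)

theorem norm_le_specRad {A : Matrix ι ι ℝ} {μ : ℂ}
    (hμ : μ ∈ spectrum ℂ (A.map (algebraMap ℝ ℂ))) : ‖μ‖ ≤ specRad A := by
  have hfin := Polynomial.finite_setOfPred_isRoot (A.map (algebraMap ℝ ℂ)).charpoly_monic.ne_zero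
  refine le_csSup ((hfin.image (‖·‖)).bddAbove.mono ?_)
    ⟨μ, Matrix.mem_spectrum_iff_isRoot_charpoly.mp hμ, rfl⟩
  rintro _ ⟨ν, hν, rfl⟩
  exact ⟨ν, hν, rfl⟩

theorem trace_pow_le_card_mul_specRad_pow (A : Matrix ι ι ℝ) (N : ℕ) :
    (A ^ N).trace ≤ Fintype.card ι * specRad A ^ N := by
  rcases N.eq_zero_or_pos with rfl | hN
  · simp
  set M := A.map (algebraMap ℝ ℂ)
  have htrace : (((A ^ N).trace : ℝ) : ℂ) = (M ^ N).trace := by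
    rw [← Matrix.map_pow]
    exact AddMonoidHom.map_trace (algebraMap ℝ ℂ) _
  calc (A ^ N).trace ≤ ‖(((A ^ N).trace : ℝ) : ℂ)‖ := by
        rw [Complex.norm_real, Real.norm_eq_abs]; exact le_abs_self _
    _ = ‖(M ^ N).trace‖ := by rw [htrace]
    _ ≤ Fintype.card ι * specRad A ^ N := by
        refine Matrix.norm_trace_le_card_mul (by positivity [specRad_nonneg A]) ?_
        rw [spectrum.map_pow_of_pos M hN]
        rintro _ ⟨μ, hμ, rfl⟩
        rw [norm_pow]
        exact pow_le_pow_left₀ (norm_nonneg _) (norm_le_specRad hμ) N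

end SpectralBound

section Nonneg

variable {ι R : Type*} [Fintype ι] [CommSemiring R] [PartialOrder R] [IsOrderedRing R]
  {A : Matrix ι ι R}

theorem Matrix.apply_self_le_trace (hA : ∀ i, 0 ≤ A i i) (i : ι) : A i i ≤ A.trace :=
  single_le_sum (fun j _ => hA j) (mem_univ i)

variable [DecidableEq ι]

theorem Matrix.prod_walk_le_pow_apply (hA : ∀ i j, 0 ≤ A i j) (N : ℕ) (g : ℕ → ι) :
    ∏ j ∈ range N, A (g j) (g (j + 1)) ≤ (A ^ N) (g 0) (g N) := by
  induction N generalizing g with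
  | zero => simp
  | succ N ih =>
    calc ∏ j ∈ range (N + 1), A (g j) (g (j + 1))
        = A (g 0) (g 1) * ∏ j ∈ range N, A (g (j + 1)) (g (j + 1 + 1)) := by
          rw [prod_range_succ', mul_comm]
      _ ≤ A (g 0) (g 1) * (A ^ N) (g 1) (g (N + 1)) :=
          mul_le_mul_of_nonneg_left (ih fun j => g (j + 1)) (hA _ _)
      _ ≤ (A ^ (N + 1)) (g 0) (g (N + 1)) := by
          rw [pow_succ', Matrix.mul_apply]
          exact single_le_sum (f := fun k => A (g 0) k * (A ^ N) k (g (N + 1)))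
            (fun k _ => mul_nonneg (hA _ _) (Matrix.pow_apply_nonneg hA _ _ _)) (mem_univ _)

theorem Matrix.apply_self_pow_le_pow_apply_self (hA : ∀ i j, 0 ≤ A i j) (i : ι) (N : ℕ) :
    A i i ^ N ≤ (A ^ N) i i := by
  simpa using A.prod_walk_le_pow_apply hA N fun _ => i

theorem Matrix.prod_cycle_le_pow_apply_self (hA : ∀ i j, 0 ≤ A i j) {m : ℕ}
    (f : Fin (m + 1) → ι) :
    ∏ j : Fin (m + 1), A (f j) (f (j + 1)) ≤ (A ^ (m + 1)) (f 0) (f 0) := by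
  have := A.prod_walk_le_pow_apply hA (m + 1) fun j => f (Fin.ofNat (m + 1) j)
  rw [← Fin.prod_univ_eq_prod_range] at this
  have hsucc (j : Fin (m + 1)) : Fin.ofNat (m + 1) (j + 1) = j + 1 := by
    ext; simp [Fin.val_add]
  simpa only [hsucc, Fin.ofNat_val_eq_self, Fin.ofNat_zero, Fin.ofNat_self] using this

end Nonneg

theorem cycle_mean_le_specRad_general (n m : ℕ) (A : Matrix (Fin n) (Fin n) ℝ)
    (hA : ∀ i j, 0 ≤ A i j) (f : Fin (m + 1) → Fin n) :
    (∏ j : Fin (m + 1), A (f j) (f (j + 1))) ^ ((1 : ℝ) / (m + 1)) ≤ specRad A := by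
  set c := ∏ j : Fin (m + 1), A (f j) (f (j + 1))
  have hc : 0 ≤ c := prod_nonneg fun j _ => hA _ _
  have hρ := specRad_nonneg A
  have hB := Matrix.pow_apply_nonneg hA (m + 1)
  have hpow (k : ℕ) : c ^ k ≤ n * (specRad A ^ (m + 1)) ^ k :=
    calc c ^ k ≤ (A ^ (m + 1)) (f 0) (f 0) ^ k :=
          pow_le_pow_left₀ hc (A.prod_cycle_le_pow_apply_self hA f) k
      _ ≤ ((A ^ (m + 1)) ^ k) (f 0) (f 0) := Matrix.apply_self_pow_le_pow_apply_self hB _ k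
      _ ≤ ((A ^ (m + 1)) ^ k).trace :=
          Matrix.apply_self_le_trace (fun i => Matrix.pow_apply_nonneg hB k i i) _
      _ ≤ n * (specRad A ^ (m + 1)) ^ k := by
          simpa [← pow_mul] using trace_pow_le_card_mul_specRad_pow A ((m + 1) * k)
  rw [one_div, Real.rpow_inv_le_iff_of_pos hc hρ (by positivity)]
  exact_mod_cast le_of_forall_pow_le_mul_pow (pow_nonneg hρ _) hpow

/-- Friedland's lower bound: for a nonnegative `n×n` matrix `A` and any cycle
`f 0 → f 1 → ⋯ → f m → f 0` through distinct indices (`f : Fin (m+1) → Fin n`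
injective, addition in `Fin (m+1)` being cyclic), the geometric mean
`μ_σ(A) = (Π_j A (f j) (f (j+1)))^{1/(m+1)}` of the entries along the cycle
is at most the spectral radius `ρ(A)`. -/
theorem cycle_mean_le_specRad (n m : ℕ) (A : Matrix (Fin n) (Fin n) ℝ)
    (hA : ∀ i j, 0 ≤ A i j) (f : Fin (m + 1) → Fin n) (hf : Function.Injective f) :
    (∏ j : Fin (m + 1), A (f j) (f (j + 1))) ^ ((1 : ℝ) / (m + 1)) ≤ specRad A :=
  cycle_mean_le_specRad_general n m A hA f
end

section
/- Let S be the (k+2)×(k+2) 0-1 matrix with S₁₂ = S₂₁ = 1, S₂,(i+2) = S_{(i+2),2} = 1 for i = 1,…,k, Sᵢᵢ = 1 for i = 2,…,k+2 (self-infection of the vector and each reservoir), and zeros elsewhere. Then the spectral radius of S is at most √(k+1) + 1. -/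
/-- The sign pattern `S` of the star NGM with self-infections: index `0` is the human,
index `1` the vector, indices `2,…,k+1` the reservoirs; `S₀₁ = S₁₀ = 1`,
`S₁,(i+2) = S_{(i+2),1} = 1`, `Sᵢᵢ = 1` for `i ≥ 1`, zeros elsewhere
(written with 0-based indices). -/
def Sstar (k : ℕ) : Matrix (Fin (k + 2)) (Fin (k + 2)) ℝ :=
  Matrix.of fun i j =>
    if (i.val = 0 ∧ j.val = 1) ∨ (i.val = 1 ∧ j.val = 0) ∨
        (i.val = 1 ∧ 2 ≤ j.val) ∨ (j.val = 1 ∧ 2 ≤ i.val) ∨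
        (i = j ∧ 1 ≤ i.val) then 1 else 0

/-!
A Collatz–Wielandt bound: if a nonnegative matrix `A` admits a positive vector `d` with
`A d ≤ c d`, then every complex eigenvalue `μ` of `A` satisfies `|μ| ≤ c`; indeed, at an index
`i` maximizing `|vᵢ| / dᵢ` for an eigenvector `v`, the `i`-th row of `A v = μ v` gives
`|μ| |vᵢ| ≤ (|vᵢ| / dᵢ) (A d)ᵢ ≤ c |vᵢ|`. For `S` take `s = √(k+1)` and `d = (1, s, 1, …, 1)`:
then `S d = (s, s + k + 1, s + 1, …, s + 1) ≤ (s + 1) d`, since `s + k + 1 = s (s + 1)`.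
-/

open Matrix Finset

theorem Matrix.exists_mulVec_eq_smul_of_isRoot_charpoly {K n : Type*} [Field K] [Fintype n]
    [DecidableEq n] {A : Matrix n n K} {μ : K} (h : A.charpoly.IsRoot μ) :
    ∃ v ≠ 0, A *ᵥ v = μ • v := by
  obtain ⟨v, hv⟩ := ((Module.End.hasEigenvalue_iff_isRoot_charpoly (toLin' A) μ).2
    (by rwa [charpoly_toLin'])).exists_hasEigenvector
  exact ⟨v, hv.2, by simpa using hv.apply_eq_smul⟩

theorem Matrix.norm_eigenvalue_le_of_mulVec_le_smul {n : Type*} [Fintype n] {A : Matrix n n ℝ}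
    (hA : ∀ i j, 0 ≤ A i j) {d : n → ℝ} (hd : ∀ i, 0 < d i) {c : ℝ} (hAd : A *ᵥ d ≤ c • d)
    {μ : ℂ} {v : n → ℂ} (hv : v ≠ 0) (hμ : A.map (algebraMap ℝ ℂ) *ᵥ v = μ • v) :
    ‖μ‖ ≤ c := by
  obtain ⟨j₀, hj₀⟩ := Function.ne_iff.1 hv
  obtain ⟨i, -, hi⟩ := exists_max_image univ (fun j => ‖v j‖ / d j) ⟨j₀, mem_univ j₀⟩
  set t := ‖v i‖ / d i
  have ht : 0 < t := (div_pos (norm_pos_iff.2 hj₀) (hd j₀)).trans_le (hi j₀ (mem_univ j₀))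
  have hvt : ∀ j, ‖v j‖ ≤ t * d j := fun j => (div_le_iff₀ (hd j)).1 (hi j (mem_univ j))
  have key : ‖μ‖ * (t * d i) ≤ c * (t * d i) :=
    calc ‖μ‖ * (t * d i) = ‖(A.map (algebraMap ℝ ℂ) *ᵥ v) i‖ := by
          rw [hμ, Pi.smul_apply, smul_eq_mul, norm_mul, div_mul_cancel₀ _ (hd i).ne']
      _ ≤ ∑ j, ‖A.map (algebraMap ℝ ℂ) i j * v j‖ := norm_sum_le _ _
      _ = ∑ j, A i j * ‖v j‖ := sum_congr rfl fun j _ => by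
          rw [map_apply, norm_mul, Complex.coe_algebraMap, Complex.norm_of_nonneg (hA i j)]
      _ ≤ ∑ j, A i j * (t * d j) := by gcongr with j; exacts [hA i j, hvt j]
      _ = t * (A *ᵥ d) i := by
          simp only [mulVec, dotProduct, mul_sum]
          exact sum_congr rfl fun j _ => by ring
      _ ≤ t * (c * d i) := by gcongr; exact hAd i
      _ = c * (t * d i) := by ring
  exact le_of_mul_le_mul_right key (mul_pos ht (hd i))

theorem specRad_le_of_mulVec_le_smul {n : Type*} [Fintype n] [DecidableEq n]
    {A : Matrix n n ℝ} (hA : ∀ i j, 0 ≤ A i j) {d : n → ℝ} (hd : ∀ i, 0 < d i) {c : ℝ}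
    (hc : 0 ≤ c) (hAd : A *ᵥ d ≤ c • d) : specRad A ≤ c := by
  refine Real.sSup_le ?_ hc
  rintro r ⟨μ, hμ, rfl⟩
  obtain ⟨v, hv, hAv⟩ := exists_mulVec_eq_smul_of_isRoot_charpoly hμ
  exact norm_eigenvalue_le_of_mulVec_le_smul hA hd hAd hv hAv

theorem Sstar_nonneg (k : ℕ) (i j : Fin (k + 2)) : 0 ≤ Sstar k i j := by
  simp only [Sstar, of_apply]
  split_ifs <;> norm_num

noncomputable def starWeight (k : ℕ) (j : Fin (k + 2)) : ℝ :=
  if j = 1 then √(k + 1) else 1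

theorem starWeight_pos (k : ℕ) (j : Fin (k + 2)) : 0 < starWeight k j := by
  unfold starWeight
  split_ifs <;> positivity

theorem Sstar_mulVec_starWeight_le (k : ℕ) :
    Sstar k *ᵥ starWeight k ≤ (√(k + 1) + 1) • starWeight k := by
  refine Fin.cases ?_ (Fin.cases ?_ fun m => ?_) <;>
    simp [mulVec, dotProduct, Fin.sum_univ_succ, Sstar, starWeight, Fin.succ_succ_ne_one]
  nlinarith [Real.sq_sqrt (by positivity : (0 : ℝ) ≤ k + 1)]

/-- The spectral radius of the sign pattern of the star model with self-infections is at
most `√(k+1) + 1`. -/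
theorem specRad_sign_pattern_le (k : ℕ) :
    specRad (Sstar k) ≤ Real.sqrt (k + 1) + 1 :=
  specRad_le_of_mulVec_le_smul (Sstar_nonneg k) (starWeight_pos k) (by positivity)
    (Sstar_mulVec_starWeight_le k)
end

section
/- If a nonnegative matrix A has some cycle σ with μ_σ(A) > 1, then ρ(A) > 1. -/
/-!
Walking `k` times around the cycle shows that the diagonal entry of `(A ^ (m + 1)) ^ k` at
`f 0` is at least `P ^ k`, where `P > 1` is the product of the entries along the cycle.
Hence the norms of the powers of `A ^ (m + 1)` grow at least like `P ^ k`, and Gelfand's formula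
gives `ρ(A) ^ (m + 1) = ρ(A ^ (m + 1)) ≥ P > 1`. Every point of the complex spectrum of `A` is a
root of its characteristic polynomial, so `ρ(A) ≤ specRad A`.
-/

open Filter Polynomial

-- Gelfand's formula needs some Banach algebra norm on complex matrices; any one will do.
attribute [local instance] Matrix.linftyOpSeminormedAddCommGroup Matrix.linftyOpNormedRing
  Matrix.linftyOpNormedAlgebra

namespace spectrum

lemma spectralRadius_pow {𝕜 A : Type*} [NormedField 𝕜] [IsAlgClosed 𝕜] [Ring A]
    [Algebra 𝕜 A] (a : A) {n : ℕ} (hn : 0 < n) :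
    spectralRadius 𝕜 (a ^ n) = spectralRadius 𝕜 a ^ n := by
  refine le_antisymm ?_ (spectralRadius_pow_le a n hn.ne')
  rw [spectralRadius, map_pow_of_pos a hn]
  refine iSup₂_le ?_
  rintro _ ⟨μ, hμ, rfl⟩
  rw [nnnorm_pow, ENNReal.coe_pow]
  exact pow_le_pow_left₀ zero_le (le_iSup₂ (α := ENNReal) μ hμ) n

lemma ofReal_le_spectralRadius_of_pow_le_norm_pow {A : Type*} [NormedRing A]
    [NormedAlgebra ℂ A] [CompleteSpace A] {a : A} {c : ℝ} (h : ∀ k : ℕ, c ^ k ≤ ‖a ^ k‖) :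
    ENNReal.ofReal c ≤ spectralRadius ℂ a := by
  refine ge_of_tendsto (pow_norm_pow_one_div_tendsto_nhds_spectralRadius a) ?_
  filter_upwards [eventually_ne_atTop 0] with k hk
  rcases le_total c 0 with hc | hc
  · simp [ENNReal.ofReal_of_nonpos hc]
  refine ENNReal.ofReal_le_ofReal ?_
  calc c = (c ^ k) ^ (1 / k : ℝ) := by
        rw [one_div, Real.pow_rpow_inv_natCast hc hk]
    _ ≤ ‖a ^ k‖ ^ (1 / k : ℝ) := by gcongr; exact h k

end spectrum

namespace Matrix

lemma norm_apply_le_linfty_opNorm {M N α : Type*} [Fintype M] [Fintype N]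
    [SeminormedAddCommGroup α] (A : Matrix M N α) (i : M) (j : N) : ‖A i j‖ ≤ ‖A‖ := by
  rw [linfty_opNorm_def]
  exact_mod_cast
    (Finset.single_le_sum (f := fun j => ‖A i j‖₊) (fun _ _ => zero_le) (Finset.mem_univ j)).trans
      (Finset.le_sup (f := fun i => ∑ j, ‖A i j‖₊) (Finset.mem_univ i))

variable {N α : Type*} [Fintype N] [DecidableEq N] [CommSemiring α] [PartialOrder α]
  [IsOrderedRing α] {A : Matrix N N α}

lemma prod_walk_le_pow_apply_s16 (hA : ∀ i j, 0 ≤ A i j) (g : ℕ → N) (L : ℕ) :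
    ∏ j ∈ Finset.range L, A (g j) (g (j + 1)) ≤ (A ^ L) (g 0) (g L) := by
  induction L with
  | zero => simp
  | succ L ih =>
    rw [Finset.prod_range_succ, pow_succ, mul_apply]
    calc (∏ j ∈ Finset.range L, A (g j) (g (j + 1))) * A (g L) (g (L + 1))
        ≤ (A ^ L) (g 0) (g L) * A (g L) (g (L + 1)) :=
          mul_le_mul_of_nonneg_right ih (hA _ _)
      _ ≤ ∑ l, (A ^ L) (g 0) l * A l (g (L + 1)) :=
          Finset.single_le_sum (f := fun l => (A ^ L) (g 0) l * A l (g (L + 1)))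
            (fun l _ => mul_nonneg (pow_apply_nonneg hA L _ _) (hA _ _)) (Finset.mem_univ _)

lemma apply_self_pow_le_pow_apply_self_s16 (hA : ∀ i j, 0 ≤ A i j) (i : N) (k : ℕ) :
    A i i ^ k ≤ (A ^ k) i i := by
  simpa using prod_walk_le_pow_apply_s16 hA (fun _ => i) k

open Fin.NatCast in
lemma prod_cycle_le_pow_apply_self_s16 (hA : ∀ i j, 0 ≤ A i j) {m : ℕ} (f : Fin (m + 1) → N) :
    ∏ j : Fin (m + 1), A (f j) (f (j + 1)) ≤ (A ^ (m + 1)) (f 0) (f 0) := by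
  have h := prod_walk_le_pow_apply_s16 hA (fun j => f j) (m + 1)
  rw [← Fin.prod_univ_eq_prod_range] at h
  simpa [Fin.natCast_self] using h

end Matrix

lemma spectralRadius_le_ofReal_specRad {N : Type*} [Fintype N] [DecidableEq N]
    (A : Matrix N N ℝ) :
    spectralRadius ℂ (A.map (algebraMap ℝ ℂ)) ≤ ENNReal.ofReal (specRad A) := by
  refine iSup₂_le fun μ hμ => ?_
  rw [Matrix.mem_spectrum_iff_isRoot_charpoly] at hμ
  have hfin :
      {r : ℝ | ∃ μ : ℂ, ((A.map (algebraMap ℝ ℂ)).charpoly).IsRoot μ ∧ r = ‖μ‖}.Finite :=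
    ((finite_setOfPred_isRoot (Matrix.charpoly_monic _).ne_zero).image (‖·‖)).subset
      fun _ ⟨ν, hν, hr⟩ => ⟨ν, hν, hr.symm⟩
  exact (ofReal_norm μ).ge.trans
    (ENNReal.ofReal_le_ofReal (le_csSup hfin.bddAbove ⟨μ, hμ, rfl⟩))

theorem specRad_gt_one_of_cycle_general (n m : ℕ) (A : Matrix (Fin n) (Fin n) ℝ)
    (hA : ∀ i j, 0 ≤ A i j) (f : Fin (m + 1) → Fin n)
    (hσ : (∏ j : Fin (m + 1), A (f j) (f (j + 1))) ^ ((1 : ℝ) / (m + 1)) > 1) :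
    specRad A > 1 := by
  set P := ∏ j : Fin (m + 1), A (f j) (f (j + 1))
  have hP0 : 0 ≤ P := Finset.prod_nonneg fun _ _ => hA _ _
  have hP : 1 < P := by
    by_contra! h
    exact hσ.not_ge (Real.rpow_le_one hP0 h (by positivity))
  set B := A.map (algebraMap ℝ ℂ) with hB
  have hgrowth (k : ℕ) : P ^ k ≤ ‖(B ^ (m + 1)) ^ k‖ := calc
    P ^ k ≤ (A ^ (m + 1)) (f 0) (f 0) ^ k :=
      pow_le_pow_left₀ hP0 (Matrix.prod_cycle_le_pow_apply_self_s16 hA f) k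
    _ ≤ ((A ^ (m + 1)) ^ k) (f 0) (f 0) :=
      Matrix.apply_self_pow_le_pow_apply_self_s16 (Matrix.pow_apply_nonneg hA _) _ k
    _ = ‖((B ^ (m + 1)) ^ k) (f 0) (f 0)‖ := by
      rw [hB, ← Matrix.map_pow, ← Matrix.map_pow, Matrix.map_apply, Complex.coe_algebraMap,
        Complex.norm_real, Real.norm_of_nonneg
          (Matrix.pow_apply_nonneg (Matrix.pow_apply_nonneg hA _) _ _ _)]
    _ ≤ ‖(B ^ (m + 1)) ^ k‖ := Matrix.norm_apply_le_linfty_opNorm _ _ _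
  have hpow : 1 < spectralRadius ℂ B ^ (m + 1) := calc
    1 < ENNReal.ofReal P := ENNReal.one_lt_ofReal.mpr hP
    _ ≤ spectralRadius ℂ (B ^ (m + 1)) :=
      spectrum.ofReal_le_spectralRadius_of_pow_le_norm_pow hgrowth
    _ = spectralRadius ℂ B ^ (m + 1) := spectrum.spectralRadius_pow B m.succ_pos
  have hρ : 1 < spectralRadius ℂ B := by
    by_contra! h
    exact hpow.not_ge (pow_le_one₀ zero_le h)
  exact ENNReal.one_lt_ofReal.mp (hρ.trans_le (spectralRadius_le_ofReal_specRad A))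

/-- If a nonnegative matrix `A` has a cycle `f 0 → f 1 → ⋯ → f m → f 0` through distinct
indices whose geometric mean `μ_σ(A) = (Π_j A (f j) (f (j+1)))^{1/(m+1)}` exceeds `1`,
then `ρ(A) > 1`. -/
theorem specRad_gt_one_of_cycle (n m : ℕ) (A : Matrix (Fin n) (Fin n) ℝ)
    (hA : ∀ i j, 0 ≤ A i j) (f : Fin (m + 1) → Fin n) (hf : Function.Injective f)
    (hσ : (∏ j : Fin (m + 1), A (f j) (f (j + 1))) ^ ((1 : ℝ) / (m + 1)) > 1) :
    specRad A > 1 :=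
  specRad_gt_one_of_cycle_general n m A hA f hσ
end
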